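/- (B-sub-update of model BC-X decreases the cost.) Let α > 0, λ_B, μ_B, τ ≥ 0, let X ∈ ℝ^{N×T} be nonnegative, C ∈ ℝ^{K×T} have strictly positive entries, and let B̃ ∈ ℝ^{N×K} have strictly positive entries. With TV, P, Z defined as in the context, define B⁺ := B̃ ∘ (αXCᵀ + τP(B̃) ∘ Z(B̃)) ⊘ (αB̃CCᵀ + μ_B B̃ + λ_B𝟙_{N×K} + τB̃ ∘ P(B̃)). Then (α/2)‖B⁺C − X‖_F² + λ_B‖B⁺‖₁ + (μ_B/2)‖B⁺‖_F² + (τ/2)TV(B⁺) ≤ (α/2)‖B̃C − X‖_F² + λ_B‖B̃‖₁ + (μ_B/2)‖B̃‖_F² + (τ/2)TV(B̃). -/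

import Mathlib

open Matrix BigOperators

/-- `|∇_{nk}B| = sqrt(ε² + Σ_{ℓ∈𝒩_n}(B_{nk} − B_{ℓk})²)`. -/
noncomputable def gradAbs (N K : ℕ) (ε : ℝ) (nbr : Fin N → Finset (Fin N))
    (B : Matrix (Fin N) (Fin K) ℝ) (n : Fin N) (k : Fin K) : ℝ :=
  Real.sqrt (ε ^ 2 + ∑ ℓ ∈ nbr n, (B n k - B ℓ k) ^ 2)

/-- The smoothed isotropic total variation `TV(B) = Σ_k Σ_n |∇_{nk}B|`. -/
noncomputable def smoothTV (N K : ℕ) (ε : ℝ) (nbr : Fin N → Finset (Fin N))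
    (B : Matrix (Fin N) (Fin K) ℝ) : ℝ :=
  ∑ k : Fin K, ∑ n : Fin N, gradAbs N K ε nbr B n k

/-- The matrix `P(B)` from the TV surrogate construction. -/
noncomputable def Pmat (N K : ℕ) (ε : ℝ) (nbr : Fin N → Finset (Fin N))
    (B : Matrix (Fin N) (Fin K) ℝ) : Matrix (Fin N) (Fin K) ℝ :=
  fun n k =>
    (1 / gradAbs N K ε nbr B n k) * (∑ _ℓ ∈ nbr n, (1 : ℝ))
      + ∑ ℓ ∈ Finset.univ.filter (fun ℓ => n ∈ nbr ℓ), 1 / gradAbs N K ε nbr B ℓ k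

/-- The matrix `Z(B)` from the TV surrogate construction. -/
noncomputable def Zmat (N K : ℕ) (ε : ℝ) (nbr : Fin N → Finset (Fin N))
    (B : Matrix (Fin N) (Fin K) ℝ) : Matrix (Fin N) (Fin K) ℝ :=
  fun n k =>
    (1 / Pmat N K ε nbr B n k) *
      ((1 / gradAbs N K ε nbr B n k) * (∑ ℓ ∈ nbr n, (B n k + B ℓ k) / 2)
        + ∑ ℓ ∈ Finset.univ.filter (fun ℓ => n ∈ nbr ℓ),
            (B n k + B ℓ k) / (2 * gradAbs N K ε nbr B ℓ k))

lemma key_scalar (A lam num b : ℝ) (hA : 0 ≤ A) (hlam : 0 ≤ lam) (hnum : 0 ≤ num)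
    (hb : 0 < b) (hdeg : b * A + lam = 0 → num = 0) :
    A/2 * (b * num / (b*A + lam))^2 - (num - lam) * (b * num / (b*A + lam))
      ≤ A/2 * b^2 - (num - lam) * b := by
  rcases eq_or_lt_of_le (by positivity : (0:ℝ) ≤ b*A + lam) with hq | hq
  · have hn := hdeg hq.symm
    have hA0 : A = 0 := by nlinarith
    simp [hn, hA0]
    nlinarith
  · set q := b*A + lam with hqdef
    have hid : (A/2 * b^2 - (num - lam) * b) - (A/2 * (b * num / q)^2 - (num - lam) * (b * num / q))
        = b*(num - q)^2*(A*b + 2*lam) / (2*q^2) := by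
      field_simp
      ring
    have : 0 ≤ b*(num - q)^2*(A*b + 2*lam) / (2*q^2) := by positivity
    linarith [hid ▸ this]

lemma cauchy_fid {K : ℕ} (c bt b : Fin K → ℝ) (hc : ∀ k, 0 < c k) (hbt : ∀ k, 0 < bt k) :
    (∑ k, c k * b k)^2 ≤ (∑ k, c k * bt k) * ∑ k, c k * (b k)^2 / bt k := by
  have h := Finset.sum_mul_sq_le_sq_mul_sq Finset.univ
    (fun k => Real.sqrt (c k * bt k)) (fun k => Real.sqrt (c k / bt k) * b k)
  have e1 : ∀ k : Fin K, Real.sqrt (c k * bt k) * (Real.sqrt (c k / bt k) * b k) = c k * b k := by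
    intro k
    rw [← mul_assoc, ← Real.sqrt_mul (mul_nonneg (hc k).le (hbt k).le)]
    have : c k * bt k * (c k / bt k) = (c k)^2 := by field_simp [(hbt k).ne']
    rw [this, Real.sqrt_sq (hc k).le]
  have e2 : ∀ k : Fin K, (Real.sqrt (c k * bt k))^2 = c k * bt k := fun k => Real.sq_sqrt (mul_nonneg (hc k).le (hbt k).le)
  have e3 : ∀ k : Fin K, (Real.sqrt (c k / bt k) * b k)^2 = c k * (b k)^2 / bt k := by
    intro k
    rw [mul_pow, Real.sq_sqrt (div_nonneg (hc k).le (hbt k).le)]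
    ring
  calc (∑ k, c k * b k)^2 = (∑ k, Real.sqrt (c k * bt k) * (Real.sqrt (c k / bt k) * b k))^2 := by
        rw [Finset.sum_congr rfl (fun k _ => (e1 k).symm)]
    _ ≤ (∑ k, (Real.sqrt (c k * bt k))^2) * ∑ k, (Real.sqrt (c k / bt k) * b k)^2 := h
    _ = (∑ k, c k * bt k) * ∑ k, c k * (b k)^2 / bt k := by
        rw [Finset.sum_congr rfl (fun k _ => e2 k), Finset.sum_congr rfl (fun k _ => e3 k)]

lemma sqrt_le_half (y g : ℝ) (hy : 0 ≤ y) (hg : 0 < g) : Real.sqrt y ≤ g/2 + y/(2*g) := by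
  have h2 : g/2 + y/(2*g) = (g^2 + y)/(2*g) := by field_simp
  rw [h2, le_div_iff₀ (by positivity)]
  nlinarith [sq_nonneg (g - Real.sqrt y), Real.sq_sqrt hy, Real.sqrt_nonneg y]

lemma sq_split (a b m : ℝ) : (a - b)^2 ≤ 2*(a-m)^2 + 2*(b-m)^2 := by
  nlinarith [sq_nonneg (a + b - 2*m)]


section Helpers
variable {N K : ℕ} (ε : ℝ) (nbr : Fin N → Finset (Fin N)) (Bt : Matrix (Fin N) (Fin K) ℝ)

lemma grad_pos (hε : 0 < ε) (B : Matrix (Fin N) (Fin K) ℝ) (n : Fin N) (k : Fin K) :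
    0 < gradAbs N K ε nbr B n k := by
  apply Real.sqrt_pos.mpr
  have : 0 ≤ ∑ ℓ ∈ nbr n, (B n k - B ℓ k) ^ 2 :=
    Finset.sum_nonneg fun _ _ => sq_nonneg _
  nlinarith

lemma P_pos (hε : 0 < ε) (hnbr : ∀ n, (nbr n).Nonempty) (n : Fin N) (k : Fin K) :
    0 < Pmat N K ε nbr Bt n k := by
  have h1 : 0 < (1 / gradAbs N K ε nbr Bt n k) * (∑ _ℓ ∈ nbr n, (1 : ℝ)) := by
    apply mul_pos (one_div_pos.mpr (grad_pos ε nbr hε Bt n k))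
    rw [Finset.sum_const, nsmul_eq_mul, mul_one]
    exact_mod_cast (hnbr n).card_pos
  have h2 : 0 ≤ ∑ ℓ ∈ Finset.univ.filter (fun ℓ => n ∈ nbr ℓ), 1 / gradAbs N K ε nbr Bt ℓ k :=
    Finset.sum_nonneg fun ℓ _ => (one_div_pos.mpr (grad_pos ε nbr hε Bt ℓ k)).le
  exact add_pos_of_pos_of_nonneg h1 h2


lemma Z_nonneg (hε : 0 < ε) (hnbr : ∀ n, (nbr n).Nonempty) (hBt : ∀ n k, 0 < Bt n k)
    (n : Fin N) (k : Fin K) : 0 ≤ Zmat N K ε nbr Bt n k := by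
  apply mul_nonneg (one_div_nonneg.mpr (P_pos ε nbr Bt hε hnbr n k).le)
  apply add_nonneg
  · apply mul_nonneg (one_div_nonneg.mpr (grad_pos ε nbr hε Bt n k).le)
    exact Finset.sum_nonneg fun ℓ _ => by
      have := hBt n k; have := hBt ℓ k; positivity
  · exact Finset.sum_nonneg fun ℓ _ => div_nonneg
      (by have := hBt n k; have := hBt ℓ k; positivity)
      (by have := grad_pos ε nbr hε Bt ℓ k; positivity)

lemma PZ_eq (hε : 0 < ε) (hnbr : ∀ n, (nbr n).Nonempty) (n : Fin N) (k : Fin K) :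
    Pmat N K ε nbr Bt n k * Zmat N K ε nbr Bt n k
      = (1 / gradAbs N K ε nbr Bt n k) * (∑ ℓ ∈ nbr n, (Bt n k + Bt ℓ k) / 2)
        + ∑ ℓ ∈ Finset.univ.filter (fun ℓ => n ∈ nbr ℓ),
            (Bt n k + Bt ℓ k) / (2 * gradAbs N K ε nbr Bt ℓ k) := by
  rw [Zmat, ← mul_assoc, mul_one_div, div_self (P_pos ε nbr Bt hε hnbr n k).ne', one_mul]

lemma sum_nbr_swap {N' : ℕ} (nbr' : Fin N' → Finset (Fin N')) (F : Fin N' → Fin N' → ℝ) :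
    ∑ n, ∑ ℓ ∈ nbr' n, F n ℓ
      = ∑ n, ∑ ℓ ∈ Finset.univ.filter (fun ℓ => n ∈ nbr' ℓ), F ℓ n := by
  calc ∑ n, ∑ ℓ ∈ nbr' n, F n ℓ
      = ∑ n, ∑ ℓ, if ℓ ∈ nbr' n then F n ℓ else 0 := by
        refine Finset.sum_congr rfl fun n _ => ?_
        rw [Finset.sum_ite_mem, Finset.univ_inter]
    _ = ∑ ℓ, ∑ n, if ℓ ∈ nbr' n then F n ℓ else 0 := Finset.sum_comm
    _ = ∑ ℓ, ∑ n ∈ Finset.univ.filter (fun n => ℓ ∈ nbr' n), F n ℓ := by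
        refine Finset.sum_congr rfl fun ℓ _ => (Finset.sum_filter _ _).symm

lemma quad_expand (hε : 0 < ε) (hnbr : ∀ n, (nbr n).Nonempty)
    (B : Matrix (Fin N) (Fin K) ℝ) (n : Fin N) (k : Fin K) :
    (∑ ℓ ∈ nbr n, (B n k - (Bt n k + Bt ℓ k)/2)^2 / gradAbs N K ε nbr Bt n k)
      + ∑ ℓ ∈ Finset.univ.filter (fun ℓ => n ∈ nbr ℓ),
          (B n k - (Bt ℓ k + Bt n k)/2)^2 / gradAbs N K ε nbr Bt ℓ k
    = Pmat N K ε nbr Bt n k * (B n k)^2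
        - 2 * (Pmat N K ε nbr Bt n k * Zmat N K ε nbr Bt n k) * B n k
        + ((∑ ℓ ∈ nbr n, ((Bt n k + Bt ℓ k)/2)^2 / gradAbs N K ε nbr Bt n k)
            + ∑ ℓ ∈ Finset.univ.filter (fun ℓ => n ∈ nbr ℓ),
                ((Bt ℓ k + Bt n k)/2)^2 / gradAbs N K ε nbr Bt ℓ k) := by
  have hg := grad_pos ε nbr hε Bt
  have e1 : ∑ ℓ ∈ nbr n, (B n k - (Bt n k + Bt ℓ k)/2)^2 / gradAbs N K ε nbr Bt n k
      = (B n k)^2 * ((1 / gradAbs N K ε nbr Bt n k) * (∑ _ℓ ∈ nbr n, (1:ℝ)))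
        - 2 * B n k * ((1 / gradAbs N K ε nbr Bt n k) * (∑ ℓ ∈ nbr n, (Bt n k + Bt ℓ k) / 2))
        + ∑ ℓ ∈ nbr n, ((Bt n k + Bt ℓ k)/2)^2 / gradAbs N K ε nbr Bt n k := by
    simp only [Finset.mul_sum, ← Finset.sum_sub_distrib, ← Finset.sum_add_distrib]
    refine Finset.sum_congr rfl fun ℓ _ => ?_
    field_simp
    ring
  have e2 : ∑ ℓ ∈ Finset.univ.filter (fun ℓ => n ∈ nbr ℓ),
        (B n k - (Bt ℓ k + Bt n k)/2)^2 / gradAbs N K ε nbr Bt ℓ k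
      = (B n k)^2 * (∑ ℓ ∈ Finset.univ.filter (fun ℓ => n ∈ nbr ℓ), 1 / gradAbs N K ε nbr Bt ℓ k)
        - 2 * B n k * (∑ ℓ ∈ Finset.univ.filter (fun ℓ => n ∈ nbr ℓ),
            (Bt n k + Bt ℓ k) / (2 * gradAbs N K ε nbr Bt ℓ k))
        + ∑ ℓ ∈ Finset.univ.filter (fun ℓ => n ∈ nbr ℓ),
            ((Bt ℓ k + Bt n k)/2)^2 / gradAbs N K ε nbr Bt ℓ k := by
    simp only [Finset.mul_sum, ← Finset.sum_sub_distrib, ← Finset.sum_add_distrib]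
    refine Finset.sum_congr rfl fun ℓ _ => ?_
    field_simp [(hg ℓ k).ne']
    ring
  rw [e1, e2, PZ_eq ε nbr Bt hε hnbr n k, Pmat]
  ring

lemma tv_le (hε : 0 < ε) (B : Matrix (Fin N) (Fin K) ℝ) (n : Fin N) (k : Fin K) :
    gradAbs N K ε nbr B n k
      ≤ gradAbs N K ε nbr Bt n k / 2
        + (ε^2 + ∑ ℓ ∈ nbr n, (2*(B n k - (Bt n k + Bt ℓ k)/2)^2
              + 2*(B ℓ k - (Bt n k + Bt ℓ k)/2)^2)) / (2 * gradAbs N K ε nbr Bt n k) := by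
  have hg := grad_pos ε nbr hε Bt n k
  have hy : (0:ℝ) ≤ ε^2 + ∑ ℓ ∈ nbr n, (B n k - B ℓ k)^2 := by
    have : 0 ≤ ∑ ℓ ∈ nbr n, (B n k - B ℓ k) ^ 2 := Finset.sum_nonneg fun _ _ => sq_nonneg _
    positivity
  refine le_trans (sqrt_le_half _ _ hy hg) ?_
  have hsum : ∑ ℓ ∈ nbr n, (B n k - B ℓ k)^2
      ≤ ∑ ℓ ∈ nbr n, (2*(B n k - (Bt n k + Bt ℓ k)/2)^2
          + 2*(B ℓ k - (Bt n k + Bt ℓ k)/2)^2) :=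
    Finset.sum_le_sum fun ℓ _ => sq_split _ _ _
  have h2g : (0:ℝ) < 2 * gradAbs N K ε nbr Bt n k := by positivity
  exact add_le_add le_rfl ((div_le_div_iff_of_pos_right h2g).mpr (by linarith))

lemma tv_eq (hε : 0 < ε) (n : Fin N) (k : Fin K) :
    gradAbs N K ε nbr Bt n k
      = gradAbs N K ε nbr Bt n k / 2
        + (ε^2 + ∑ ℓ ∈ nbr n, (2*(Bt n k - (Bt n k + Bt ℓ k)/2)^2
              + 2*(Bt ℓ k - (Bt n k + Bt ℓ k)/2)^2)) / (2 * gradAbs N K ε nbr Bt n k) := by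
  have hg := grad_pos ε nbr hε Bt n k
  have h1 : ∑ ℓ ∈ nbr n, (2*(Bt n k - (Bt n k + Bt ℓ k)/2)^2
        + 2*(Bt ℓ k - (Bt n k + Bt ℓ k)/2)^2) = ∑ ℓ ∈ nbr n, (Bt n k - Bt ℓ k)^2 :=
    Finset.sum_congr rfl fun ℓ _ => by ring
  have h2 : ε^2 + ∑ ℓ ∈ nbr n, (Bt n k - Bt ℓ k)^2 = (gradAbs N K ε nbr Bt n k)^2 := by
    rw [gradAbs, Real.sq_sqrt]
    have : 0 ≤ ∑ ℓ ∈ nbr n, (Bt n k - Bt ℓ k) ^ 2 := Finset.sum_nonneg fun _ _ => sq_nonneg _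
    positivity
  rw [h1, h2]
  field_simp
  ring


variable {T : ℕ} (X : Matrix (Fin N) (Fin T) ℝ) (C : Matrix (Fin K) (Fin T) ℝ)

lemma mulC_apply (B : Matrix (Fin N) (Fin K) ℝ) (n : Fin N) (t : Fin T) :
    (B * C) n t = ∑ k, C k t * B n k := by
  rw [Matrix.mul_apply]
  exact Finset.sum_congr rfl fun k _ => mul_comm _ _

lemma fid_le (hC : ∀ k t, 0 < C k t) (hBt : ∀ n k, 0 < Bt n k)
    (B : Matrix (Fin N) (Fin K) ℝ) (n : Fin N) (t : Fin T) :
    ((B * C) n t - X n t)^2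
      ≤ (Bt * C) n t * (∑ k, C k t * (B n k)^2 / Bt n k)
        - 2 * X n t * (B * C) n t + (X n t)^2 := by
  rw [mulC_apply C B n t, mulC_apply C Bt n t]
  have hcs := cauchy_fid (fun k => C k t) (fun k => Bt n k) (fun k => B n k)
    (fun k => hC k t) (fun k => hBt n k)
  nlinarith [hcs]

lemma fid_eq (hBt : ∀ n k, 0 < Bt n k) (n : Fin N) (t : Fin T) :
    ((Bt * C) n t - X n t)^2
      = (Bt * C) n t * (∑ k, C k t * (Bt n k)^2 / Bt n k)
        - 2 * X n t * (Bt * C) n t + (X n t)^2 := by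
  have h1 : ∑ k, C k t * (Bt n k)^2 / Bt n k = ∑ k, C k t * Bt n k :=
    Finset.sum_congr rfl fun k _ => by field_simp [(hBt n k).ne']
  rw [h1, ← mulC_apply C Bt n t]
  ring

end Helpers



/-- **The `B` sub-update of model `BC-X` decreases the cost.**
With `α > 0`, `λ_B, μ_B, τ ≥ 0`, nonnegative `X`, strictly positive `C` and `Bt`, the
multiplicative update
`B⁺ = Bt ∘ (αXCᵀ + τP(Bt)∘Z(Bt)) ⊘ (αBtCCᵀ + μ_B Bt + λ_B𝟙 + τBt∘P(Bt))` does not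
increase the `B`-part of the `BC-X` cost function. -/
theorem BCX_B_subupdate_decreases_cost
    (N K T : ℕ)
    (ε : ℝ) (hε : 0 < ε)
    (nbr : Fin N → Finset (Fin N)) (hnbr : ∀ n, (nbr n).Nonempty)
    (α lamB muB τ : ℝ) (hα : 0 < α) (hlamB : 0 ≤ lamB) (hmuB : 0 ≤ muB) (hτ : 0 ≤ τ)
    (X : Matrix (Fin N) (Fin T) ℝ) (hX : ∀ n t, 0 ≤ X n t)
    (C : Matrix (Fin K) (Fin T) ℝ) (hC : ∀ k t, 0 < C k t)
    (Bt : Matrix (Fin N) (Fin K) ℝ) (hBt : ∀ n k, 0 < Bt n k)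
    (Bp : Matrix (Fin N) (Fin K) ℝ)
    (hBp : ∀ n k, Bp n k =
      Bt n k * (α * (X * Cᵀ) n k + τ * Pmat N K ε nbr Bt n k * Zmat N K ε nbr Bt n k)
        / (α * (Bt * C * Cᵀ) n k + muB * Bt n k + lamB
            + τ * Bt n k * Pmat N K ε nbr Bt n k)) :
    (α/2) * (∑ n, ∑ t, ((Bp * C) n t - X n t) ^ 2)
        + lamB * (∑ n, ∑ k, |Bp n k|)
        + (muB/2) * (∑ n, ∑ k, (Bp n k) ^ 2)
        + (τ/2) * smoothTV N K ε nbr Bp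
      ≤ (α/2) * (∑ n, ∑ t, ((Bt * C) n t - X n t) ^ 2)
        + lamB * (∑ n, ∑ k, |Bt n k|)
        + (muB/2) * (∑ n, ∑ k, (Bt n k) ^ 2)
        + (τ/2) * smoothTV N K ε nbr Bt := by
  classical
  have hg : ∀ n k, 0 < gradAbs N K ε nbr Bt n k := fun n k => grad_pos ε nbr hε Bt n k
  have hP : ∀ n k, 0 < Pmat N K ε nbr Bt n k := fun n k => P_pos ε nbr Bt hε hnbr n k
  have hZ : ∀ n k, 0 ≤ Zmat N K ε nbr Bt n k := fun n k => Z_nonneg ε nbr Bt hε hnbr hBt n k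
  have hXC : ∀ n k, 0 ≤ (X * Cᵀ) n k := by
    intro n k
    rw [Matrix.mul_apply]
    exact Finset.sum_nonneg fun t _ =>
      mul_nonneg (hX n t) (by rw [Matrix.transpose_apply]; exact (hC k t).le)
  have hBtC : ∀ n t, 0 ≤ (Bt * C) n t := by
    intro n t
    rw [Matrix.mul_apply]
    exact Finset.sum_nonneg fun j _ => mul_nonneg (hBt n j).le (hC j t).le
  have hBtCC : ∀ n k, 0 ≤ (Bt * C * Cᵀ) n k := by
    intro n k
    rw [Matrix.mul_apply]
    exact Finset.sum_nonneg fun t _ =>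
      mul_nonneg (hBtC n t) (by rw [Matrix.transpose_apply]; exact (hC k t).le)
  have hnum0 : ∀ n k, 0 ≤ α * (X * Cᵀ) n k
      + τ * (Pmat N K ε nbr Bt n k * Zmat N K ε nbr Bt n k) := fun n k =>
    add_nonneg (mul_nonneg hα.le (hXC n k))
      (mul_nonneg hτ (mul_nonneg (hP n k).le (hZ n k)))
  have hBp0 : ∀ n k, 0 ≤ Bp n k := by
    intro n k
    rw [hBp n k]
    apply div_nonneg
    · apply mul_nonneg (hBt n k).le
      have := hnum0 n k
      nlinarith
    · have h1 := mul_nonneg hα.le (hBtCC n k)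
      have h2 := mul_nonneg hmuB (hBt n k).le
      have h3 := mul_nonneg (mul_nonneg hτ (hBt n k).le) (hP n k).le
      linarith
  -- surrogate decrease, entrywise
  have hGdec : ∀ n k,
      (α * (Bt * C * Cᵀ) n k / Bt n k + muB + τ * Pmat N K ε nbr Bt n k)/2 * (Bp n k)^2
        - (α * (X * Cᵀ) n k + τ * (Pmat N K ε nbr Bt n k * Zmat N K ε nbr Bt n k) - lamB)
            * Bp n k
      ≤ (α * (Bt * C * Cᵀ) n k / Bt n k + muB + τ * Pmat N K ε nbr Bt n k)/2 * (Bt n k)^2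
        - (α * (X * Cᵀ) n k + τ * (Pmat N K ε nbr Bt n k * Zmat N K ε nbr Bt n k) - lamB)
            * Bt n k := by
    intro n k
    have hA : 0 ≤ α * (Bt * C * Cᵀ) n k / Bt n k + muB + τ * Pmat N K ε nbr Bt n k := by
      have h1 : 0 ≤ α * (Bt * C * Cᵀ) n k / Bt n k :=
        div_nonneg (mul_nonneg hα.le (hBtCC n k)) (hBt n k).le
      have h3 := mul_nonneg hτ (hP n k).le
      linarith
    have hden : Bt n k * (α * (Bt * C * Cᵀ) n k / Bt n k + muB + τ * Pmat N K ε nbr Bt n k)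
        + lamB
        = α * (Bt * C * Cᵀ) n k + muB * Bt n k + lamB + τ * Bt n k * Pmat N K ε nbr Bt n k := by
      field_simp [(hBt n k).ne']
      ring
    have hbpkey : Bp n k =
        Bt n k * (α * (X * Cᵀ) n k + τ * (Pmat N K ε nbr Bt n k * Zmat N K ε nbr Bt n k))
          / (Bt n k * (α * (Bt * C * Cᵀ) n k / Bt n k + muB + τ * Pmat N K ε nbr Bt n k)
              + lamB) := by
      rw [hBp n k, hden]
      ring
    have hdeg : Bt n k * (α * (Bt * C * Cᵀ) n k / Bt n k + muB + τ * Pmat N K ε nbr Bt n k)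
        + lamB = 0
        → α * (X * Cᵀ) n k + τ * (Pmat N K ε nbr Bt n k * Zmat N K ε nbr Bt n k) = 0 := by
      intro h0
      rw [hden] at h0
      have h1 := mul_nonneg hα.le (hBtCC n k)
      have h2 := mul_nonneg hmuB (hBt n k).le
      have h3 := mul_nonneg (mul_nonneg hτ (hBt n k).le) (hP n k).le
      have hτ0 : τ = 0 := by
        refine le_antisymm ?_ hτ
        nlinarith [mul_pos (hBt n k) (hP n k)]
      have hQ0 : (Bt * C * Cᵀ) n k = 0 := by
        rcases (mul_nonneg hα.le (hBtCC n k)).lt_or_eq with hlt | heq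
        · nlinarith
        · exact (mul_eq_zero.mp heq.symm).resolve_left hα.ne'
      have hXC0 : (X * Cᵀ) n k = 0 := by
        rw [Matrix.mul_apply] at hQ0 ⊢
        have hall := (Finset.sum_eq_zero_iff_of_nonneg (fun t _ =>
          mul_nonneg (hBtC n t) (by rw [Matrix.transpose_apply]; exact (hC k t).le))).mp hQ0
        refine Finset.sum_eq_zero fun t ht => ?_
        exfalso
        have hpos : 0 < (Bt * C) n t * Cᵀ t k := by
          apply mul_pos ?_ (by rw [Matrix.transpose_apply]; exact hC k t)
          rw [Matrix.mul_apply]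
          exact Finset.sum_pos (fun j _ => mul_pos (hBt n j) (hC j t)) ⟨k, Finset.mem_univ k⟩
        exact hpos.ne' (hall t ht)
      rw [hXC0, hτ0]
      ring
    rw [hbpkey]
    exact key_scalar _ _ _ _ hA hlamB (hnum0 n k) (hBt n k) hdeg
  have hG : ∑ n, ∑ k,
      ((α * (Bt * C * Cᵀ) n k / Bt n k + muB + τ * Pmat N K ε nbr Bt n k)/2 * (Bp n k)^2
        - (α * (X * Cᵀ) n k + τ * (Pmat N K ε nbr Bt n k * Zmat N K ε nbr Bt n k) - lamB)
            * Bp n k)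
      ≤ ∑ n, ∑ k,
      ((α * (Bt * C * Cᵀ) n k / Bt n k + muB + τ * Pmat N K ε nbr Bt n k)/2 * (Bt n k)^2
        - (α * (X * Cᵀ) n k + τ * (Pmat N K ε nbr Bt n k * Zmat N K ε nbr Bt n k) - lamB)
            * Bt n k) :=
    Finset.sum_le_sum fun n _ => Finset.sum_le_sum fun k _ => hGdec n k
  -- splitting the surrogate sum
  have hsplit : ∀ B : Matrix (Fin N) (Fin K) ℝ,
      ∑ n, ∑ k,
      ((α * (Bt * C * Cᵀ) n k / Bt n k + muB + τ * Pmat N K ε nbr Bt n k)/2 * (B n k)^2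
        - (α * (X * Cᵀ) n k + τ * (Pmat N K ε nbr Bt n k * Zmat N K ε nbr Bt n k) - lamB)
            * B n k)
      = (α/2) * (∑ n, ∑ k, (Bt * C * Cᵀ) n k * (B n k)^2 / Bt n k)
        + (muB/2) * (∑ n, ∑ k, (B n k)^2)
        + (τ/2) * (∑ n, ∑ k, Pmat N K ε nbr Bt n k * (B n k)^2)
        - α * (∑ n, ∑ k, (X * Cᵀ) n k * B n k)
        - τ * (∑ n, ∑ k, Pmat N K ε nbr Bt n k * Zmat N K ε nbr Bt n k * B n k)
        + lamB * (∑ n, ∑ k, B n k) := by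
    intro B
    simp only [Finset.mul_sum, ← Finset.sum_add_distrib, ← Finset.sum_sub_distrib]
    refine Finset.sum_congr rfl fun n _ => Finset.sum_congr rfl fun k _ => ?_
    ring
    -- fidelity reorganization
  have hswapQ : ∀ w : Fin N → Fin K → ℝ,
      ∑ n, ∑ t, (Bt * C) n t * (∑ k, C k t * w n k)
        = ∑ n, ∑ k, (Bt * C * Cᵀ) n k * w n k := by
    intro w
    refine Finset.sum_congr rfl fun n _ => ?_
    calc ∑ t, (Bt * C) n t * ∑ k, C k t * w n k
        = ∑ t, ∑ k, (Bt * C) n t * (C k t * w n k) :=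
          Finset.sum_congr rfl fun t _ => Finset.mul_sum _ _ _
      _ = ∑ k, ∑ t, (Bt * C) n t * (C k t * w n k) := Finset.sum_comm
      _ = ∑ k, (Bt * C * Cᵀ) n k * w n k := by
          refine Finset.sum_congr rfl fun k _ => ?_
          rw [Matrix.mul_apply, Finset.sum_mul]
          refine Finset.sum_congr rfl fun t _ => ?_
          rw [Matrix.transpose_apply]
          ring
  have hswapL : ∀ B : Matrix (Fin N) (Fin K) ℝ,
      ∑ n, ∑ t, X n t * (B * C) n t = ∑ n, ∑ k, (X * Cᵀ) n k * B n k := by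
    intro B
    refine Finset.sum_congr rfl fun n _ => ?_
    calc ∑ t, X n t * (B * C) n t
        = ∑ t, ∑ k, X n t * (C k t * B n k) := by
          refine Finset.sum_congr rfl fun t _ => ?_
          rw [mulC_apply C B n t, Finset.mul_sum]
      _ = ∑ k, ∑ t, X n t * (C k t * B n k) := Finset.sum_comm
      _ = ∑ k, (X * Cᵀ) n k * B n k := by
          refine Finset.sum_congr rfl fun k _ => ?_
          rw [Matrix.mul_apply, Finset.sum_mul]
          refine Finset.sum_congr rfl fun t _ => ?_
          rw [Matrix.transpose_apply]
          ring
  have hconv : ∀ (B : Matrix (Fin N) (Fin K) ℝ) n t,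
      (∑ k, C k t * (B n k)^2 / Bt n k) = ∑ k, C k t * ((B n k)^2 / Bt n k) :=
    fun B n t => Finset.sum_congr rfl fun k _ => mul_div_assoc _ _ _
  have hfidsum : ∀ B : Matrix (Fin N) (Fin K) ℝ,
      ∑ n, ∑ t, ((Bt * C) n t * (∑ k, C k t * (B n k)^2 / Bt n k)
          - 2 * X n t * (B * C) n t + (X n t)^2)
        = (∑ n, ∑ k, (Bt * C * Cᵀ) n k * (B n k)^2 / Bt n k)
          - 2 * (∑ n, ∑ k, (X * Cᵀ) n k * B n k)
          + ∑ n, ∑ t, (X n t)^2 := by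
    intro B
    have e1 : ∑ n, ∑ t, (Bt * C) n t * (∑ k, C k t * ((B n k)^2 / Bt n k))
        = ∑ n, ∑ k, (Bt * C * Cᵀ) n k * ((B n k)^2 / Bt n k) := hswapQ _
    have e2 := hswapL B
    calc ∑ n, ∑ t, ((Bt * C) n t * (∑ k, C k t * (B n k)^2 / Bt n k)
          - 2 * X n t * (B * C) n t + (X n t)^2)
        = ∑ n, ∑ t, ((Bt * C) n t * (∑ k, C k t * ((B n k)^2 / Bt n k))
          - 2 * X n t * (B * C) n t + (X n t)^2) := by
          refine Finset.sum_congr rfl fun n _ => Finset.sum_congr rfl fun t _ => ?_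
          rw [hconv B n t]
      _ = (∑ n, ∑ t, (Bt * C) n t * (∑ k, C k t * ((B n k)^2 / Bt n k)))
          - 2 * (∑ n, ∑ t, X n t * (B * C) n t) + ∑ n, ∑ t, (X n t)^2 := by
          simp only [Finset.mul_sum, ← Finset.sum_add_distrib, ← Finset.sum_sub_distrib]
          refine Finset.sum_congr rfl fun n _ => Finset.sum_congr rfl fun t _ => ?_
          ring
      _ = (∑ n, ∑ k, (Bt * C * Cᵀ) n k * ((B n k)^2 / Bt n k))
          - 2 * (∑ n, ∑ k, (X * Cᵀ) n k * B n k) + ∑ n, ∑ t, (X n t)^2 := by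
          rw [e1, e2]
      _ = (∑ n, ∑ k, (Bt * C * Cᵀ) n k * (B n k)^2 / Bt n k)
          - 2 * (∑ n, ∑ k, (X * Cᵀ) n k * B n k) + ∑ n, ∑ t, (X n t)^2 := by
          congr 2
          refine Finset.sum_congr rfl fun n _ => Finset.sum_congr rfl fun k _ =>
            (mul_div_assoc _ _ _).symm
  have hFP : ∑ n, ∑ t, ((Bp * C) n t - X n t)^2
      ≤ (∑ n, ∑ k, (Bt * C * Cᵀ) n k * (Bp n k)^2 / Bt n k)
        - 2 * (∑ n, ∑ k, (X * Cᵀ) n k * Bp n k)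
        + ∑ n, ∑ t, (X n t)^2 := by
    refine le_trans (Finset.sum_le_sum fun n _ => Finset.sum_le_sum fun t _ =>
      fid_le Bt X C hC hBt Bp n t) (hfidsum Bp).le
  have hFT : ∑ n, ∑ t, ((Bt * C) n t - X n t)^2
      = (∑ n, ∑ k, (Bt * C * Cᵀ) n k * (Bt n k)^2 / Bt n k)
        - 2 * (∑ n, ∑ k, (X * Cᵀ) n k * Bt n k)
        + ∑ n, ∑ t, (X n t)^2 := by
    rw [← hfidsum Bt]
    exact Finset.sum_congr rfl fun n _ => Finset.sum_congr rfl fun t _ => fid_eq Bt X C hBt n t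
  -- absolute values
  have hAbsP : ∑ n, ∑ k, |Bp n k| = ∑ n, ∑ k, Bp n k :=
    Finset.sum_congr rfl fun n _ => Finset.sum_congr rfl fun k _ => abs_of_nonneg (hBp0 n k)
  have hAbsT : ∑ n, ∑ k, |Bt n k| = ∑ n, ∑ k, Bt n k :=
    Finset.sum_congr rfl fun n _ => Finset.sum_congr rfl fun k _ => abs_of_nonneg (hBt n k).le
    -- TV reorganization
  have hsplit3 : ∀ (B : Matrix (Fin N) (Fin K) ℝ) (n : Fin N) (k : Fin K),
      gradAbs N K ε nbr Bt n k / 2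
        + (ε^2 + ∑ ℓ ∈ nbr n, (2*(B n k - (Bt n k + Bt ℓ k)/2)^2
            + 2*(B ℓ k - (Bt n k + Bt ℓ k)/2)^2)) / (2 * gradAbs N K ε nbr Bt n k)
      = (gradAbs N K ε nbr Bt n k / 2 + ε^2 / (2 * gradAbs N K ε nbr Bt n k))
        + ((∑ ℓ ∈ nbr n, (B n k - (Bt n k + Bt ℓ k)/2)^2 / gradAbs N K ε nbr Bt n k)
          + ∑ ℓ ∈ nbr n, (B ℓ k - (Bt n k + Bt ℓ k)/2)^2 / gradAbs N K ε nbr Bt n k) := by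
    intro B n k
    have hsum2 : ∑ ℓ ∈ nbr n, (2*(B n k - (Bt n k + Bt ℓ k)/2)^2
        + 2*(B ℓ k - (Bt n k + Bt ℓ k)/2)^2)
        = 2*(∑ ℓ ∈ nbr n, (B n k - (Bt n k + Bt ℓ k)/2)^2)
          + 2*(∑ ℓ ∈ nbr n, (B ℓ k - (Bt n k + Bt ℓ k)/2)^2) := by
      rw [Finset.sum_add_distrib, ← Finset.mul_sum, ← Finset.mul_sum]
    rw [hsum2, ← Finset.sum_div, ← Finset.sum_div]
    field_simp
    ring
  have hTVsurr : ∀ B : Matrix (Fin N) (Fin K) ℝ,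
      ∑ k, ∑ n, (gradAbs N K ε nbr Bt n k / 2
          + (ε^2 + ∑ ℓ ∈ nbr n, (2*(B n k - (Bt n k + Bt ℓ k)/2)^2
              + 2*(B ℓ k - (Bt n k + Bt ℓ k)/2)^2)) / (2 * gradAbs N K ε nbr Bt n k))
        = (∑ n, ∑ k, Pmat N K ε nbr Bt n k * (B n k)^2)
          - 2 * (∑ n, ∑ k, Pmat N K ε nbr Bt n k * Zmat N K ε nbr Bt n k * B n k)
          + ((∑ k, ∑ n, (gradAbs N K ε nbr Bt n k / 2
                + ε^2 / (2 * gradAbs N K ε nbr Bt n k)))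
            + ∑ k, ∑ n, ((∑ ℓ ∈ nbr n, ((Bt n k + Bt ℓ k)/2)^2 / gradAbs N K ε nbr Bt n k)
                + ∑ ℓ ∈ Finset.univ.filter (fun ℓ => n ∈ nbr ℓ),
                    ((Bt ℓ k + Bt n k)/2)^2 / gradAbs N K ε nbr Bt ℓ k)) := by
    intro B
    have hc1 : ∑ k, ∑ n, Pmat N K ε nbr Bt n k * (B n k)^2
        = ∑ n, ∑ k, Pmat N K ε nbr Bt n k * (B n k)^2 := Finset.sum_comm
    have hc2 : ∑ k, ∑ n, Pmat N K ε nbr Bt n k * Zmat N K ε nbr Bt n k * B n k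
        = ∑ n, ∑ k, Pmat N K ε nbr Bt n k * Zmat N K ε nbr Bt n k * B n k := Finset.sum_comm
    calc ∑ k, ∑ n, (gradAbs N K ε nbr Bt n k / 2
          + (ε^2 + ∑ ℓ ∈ nbr n, (2*(B n k - (Bt n k + Bt ℓ k)/2)^2
              + 2*(B ℓ k - (Bt n k + Bt ℓ k)/2)^2)) / (2 * gradAbs N K ε nbr Bt n k))
        = ∑ k, ∑ n, ((gradAbs N K ε nbr Bt n k / 2 + ε^2 / (2 * gradAbs N K ε nbr Bt n k))
            + ((∑ ℓ ∈ nbr n, (B n k - (Bt n k + Bt ℓ k)/2)^2 / gradAbs N K ε nbr Bt n k)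
              + ∑ ℓ ∈ nbr n, (B ℓ k - (Bt n k + Bt ℓ k)/2)^2 / gradAbs N K ε nbr Bt n k)) :=
          Finset.sum_congr rfl fun k _ => Finset.sum_congr rfl fun n _ => hsplit3 B n k
      _ = (∑ k, ∑ n, (gradAbs N K ε nbr Bt n k / 2 + ε^2 / (2 * gradAbs N K ε nbr Bt n k)))
          + ((∑ k, ∑ n, ∑ ℓ ∈ nbr n,
                (B n k - (Bt n k + Bt ℓ k)/2)^2 / gradAbs N K ε nbr Bt n k)
            + ∑ k, ∑ n, ∑ ℓ ∈ nbr n,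
                (B ℓ k - (Bt n k + Bt ℓ k)/2)^2 / gradAbs N K ε nbr Bt n k) := by
          simp only [Finset.sum_add_distrib]
      _ = (∑ k, ∑ n, (gradAbs N K ε nbr Bt n k / 2 + ε^2 / (2 * gradAbs N K ε nbr Bt n k)))
          + ((∑ k, ∑ n, ∑ ℓ ∈ nbr n,
                (B n k - (Bt n k + Bt ℓ k)/2)^2 / gradAbs N K ε nbr Bt n k)
            + ∑ k, ∑ n, ∑ ℓ ∈ Finset.univ.filter (fun ℓ => n ∈ nbr ℓ),
                (B n k - (Bt ℓ k + Bt n k)/2)^2 / gradAbs N K ε nbr Bt ℓ k) := by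
          congr 1
          congr 1
          refine Finset.sum_congr rfl fun k _ => ?_
          exact sum_nbr_swap nbr
            (fun n ℓ => (B ℓ k - (Bt n k + Bt ℓ k)/2)^2 / gradAbs N K ε nbr Bt n k)
      _ = (∑ k, ∑ n, (gradAbs N K ε nbr Bt n k / 2 + ε^2 / (2 * gradAbs N K ε nbr Bt n k)))
          + ∑ k, ∑ n, ((∑ ℓ ∈ nbr n,
                (B n k - (Bt n k + Bt ℓ k)/2)^2 / gradAbs N K ε nbr Bt n k)
              + ∑ ℓ ∈ Finset.univ.filter (fun ℓ => n ∈ nbr ℓ),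
                (B n k - (Bt ℓ k + Bt n k)/2)^2 / gradAbs N K ε nbr Bt ℓ k) := by
          congr 1
          rw [← Finset.sum_add_distrib]
          refine Finset.sum_congr rfl fun k _ => ?_
          rw [← Finset.sum_add_distrib]
      _ = (∑ k, ∑ n, (gradAbs N K ε nbr Bt n k / 2 + ε^2 / (2 * gradAbs N K ε nbr Bt n k)))
          + ∑ k, ∑ n, (Pmat N K ε nbr Bt n k * (B n k)^2
              - 2 * (Pmat N K ε nbr Bt n k * Zmat N K ε nbr Bt n k) * B n k
              + ((∑ ℓ ∈ nbr n, ((Bt n k + Bt ℓ k)/2)^2 / gradAbs N K ε nbr Bt n k)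
                + ∑ ℓ ∈ Finset.univ.filter (fun ℓ => n ∈ nbr ℓ),
                    ((Bt ℓ k + Bt n k)/2)^2 / gradAbs N K ε nbr Bt ℓ k)) := by
          congr 1
          exact Finset.sum_congr rfl fun k _ => Finset.sum_congr rfl fun n _ =>
            quad_expand ε nbr Bt hε hnbr B n k
      _ = (∑ k, ∑ n, (gradAbs N K ε nbr Bt n k / 2 + ε^2 / (2 * gradAbs N K ε nbr Bt n k)))
          + ((∑ k, ∑ n, Pmat N K ε nbr Bt n k * (B n k)^2)
            - 2 * (∑ k, ∑ n, Pmat N K ε nbr Bt n k * Zmat N K ε nbr Bt n k * B n k)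
            + ∑ k, ∑ n, ((∑ ℓ ∈ nbr n, ((Bt n k + Bt ℓ k)/2)^2 / gradAbs N K ε nbr Bt n k)
                + ∑ ℓ ∈ Finset.univ.filter (fun ℓ => n ∈ nbr ℓ),
                    ((Bt ℓ k + Bt n k)/2)^2 / gradAbs N K ε nbr Bt ℓ k)) := by
          congr 1
          simp only [Finset.mul_sum, ← Finset.sum_add_distrib, ← Finset.sum_sub_distrib]
          refine Finset.sum_congr rfl fun k _ => Finset.sum_congr rfl fun n _ => ?_
          ring
      _ = _ := by
          rw [hc1, hc2]
          ring
  have hTVP : smoothTV N K ε nbr Bp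
      ≤ ∑ k, ∑ n, (gradAbs N K ε nbr Bt n k / 2
          + (ε^2 + ∑ ℓ ∈ nbr n, (2*(Bp n k - (Bt n k + Bt ℓ k)/2)^2
              + 2*(Bp ℓ k - (Bt n k + Bt ℓ k)/2)^2)) / (2 * gradAbs N K ε nbr Bt n k)) := by
    unfold smoothTV
    exact Finset.sum_le_sum fun k _ => Finset.sum_le_sum fun n _ => tv_le ε nbr Bt hε Bp n k
  have hTVT : smoothTV N K ε nbr Bt
      = ∑ k, ∑ n, (gradAbs N K ε nbr Bt n k / 2
          + (ε^2 + ∑ ℓ ∈ nbr n, (2*(Bt n k - (Bt n k + Bt ℓ k)/2)^2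
              + 2*(Bt ℓ k - (Bt n k + Bt ℓ k)/2)^2)) / (2 * gradAbs N K ε nbr Bt n k)) := by
    unfold smoothTV
    exact Finset.sum_congr rfl fun k _ => Finset.sum_congr rfl fun n _ => tv_eq ε nbr Bt hε n k
  -- final assembly
  rw [hsplit Bp, hsplit Bt] at hG
  rw [hAbsP, hAbsT]
  have hFP' := mul_le_mul_of_nonneg_left hFP (by positivity : (0:ℝ) ≤ α/2)
  have hTVP' := mul_le_mul_of_nonneg_left (hTVP.trans (hTVsurr Bp).le)
    (by positivity : (0:ℝ) ≤ τ/2)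
  have hFT' : (α/2) * (∑ n, ∑ t, ((Bt * C) n t - X n t)^2)
      = (α/2) * ((∑ n, ∑ k, (Bt * C * Cᵀ) n k * (Bt n k)^2 / Bt n k)
        - 2 * (∑ n, ∑ k, (X * Cᵀ) n k * Bt n k)
        + ∑ n, ∑ t, (X n t)^2) := by rw [hFT]
  have hTVT' : (τ/2) * smoothTV N K ε nbr Bt
      = (τ/2) * ((∑ n, ∑ k, Pmat N K ε nbr Bt n k * (Bt n k)^2)
          - 2 * (∑ n, ∑ k, Pmat N K ε nbr Bt n k * Zmat N K ε nbr Bt n k * Bt n k)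
          + ((∑ k, ∑ n, (gradAbs N K ε nbr Bt n k / 2
                + ε^2 / (2 * gradAbs N K ε nbr Bt n k)))
            + ∑ k, ∑ n, ((∑ ℓ ∈ nbr n, ((Bt n k + Bt ℓ k)/2)^2 / gradAbs N K ε nbr Bt n k)
                + ∑ ℓ ∈ Finset.univ.filter (fun ℓ => n ∈ nbr ℓ),
                    ((Bt ℓ k + Bt n k)/2)^2 / gradAbs N K ε nbr Bt ℓ k))) := by
    rw [hTVT, hTVsurr Bt]
  linarith [hG, hFP', hFT', hTVP', hTVT']
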